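/- In every ortholattice, the mapped orthomodularity identity (a ∪ (a' ∩ (a∪b))) ≡ (a ∪ b) = 1 holds, where a ≡ b := (a∩b)∪(a'∩b'), even though a ∪ (a' ∩ (a∪b)) = a ∪ b may fail. -/

import Mathlib

/-! With `y = a ∪ b` and `z = a ∪ y'`, the left argument is `x = a ∪ (a' ∩ y) = a ∪ z'`, and
`x ≤ y`. Comparable elements have `x ≡ y = x ∪ y'`, which here regroups to `z ∪ z' = 1`. -/

/-- An ortholattice as an algebra ⟨α, ', ∪, ∩⟩ with join `j` and
orthocomplement `c` primitive, and meet defined by De Morgan. -/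
structure OrthoLattice (α : Type*) where
  j : α → α → α
  c : α → α
  j_comm : ∀ a b, j a b = j b a
  j_assoc : ∀ a b d, j (j a b) d = j a (j b d)
  c_invol : ∀ a, c (c a) = a
  j_top : ∀ a b, j a (j b (c b)) = j b (c b)
  absorb : ∀ a b, j a (c (j (c a) (c b))) = a

namespace OrthoLattice

variable {α : Type*}

/-- meet: a ∩ b = (a' ∪ b')' -/
def m (L : OrthoLattice α) (a b : α) : α := L.c (L.j (L.c a) (L.c b))

/-- the unit 1 = a ∪ a' -/
def one (L : OrthoLattice α) (a : α) : α := L.j a (L.c a)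

/-- quantum equivalence a ≡ b = (a∩b) ∪ (a'∩b') -/
def equiv (L : OrthoLattice α) (a b : α) : α := L.j (L.m a b) (L.m (L.c a) (L.c b))

/-- classical equivalence a ≡₀ b = (a'∪b) ∩ (a∪b') -/
def equiv0 (L : OrthoLattice α) (a b : α) : α := L.m (L.j (L.c a) b) (L.j a (L.c b))

/-- Sasaki hook a →₁ b = a' ∪ (a ∩ b) -/
def sasaki (L : OrthoLattice α) (a b : α) : α := L.j (L.c a) (L.m a b)

end OrthoLattice

namespace OrthoLattice

variable {α : Type*} (L : OrthoLattice α)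

theorem j_c_c_j (a b : α) : L.j (L.c a) (L.c (L.j a b)) = L.c a := by
  simpa only [L.c_invol] using L.absorb (L.c a) (L.c b)

theorem m_j_self (a b : α) : L.m a (L.j a b) = a := by
  rw [m, j_c_c_j, L.c_invol]

theorem j_self (a : α) : L.j a a = a := by
  simpa only [j_c_c_j, L.c_invol] using L.absorb a (L.j a a)

theorem one_eq_one (a b : α) : L.one a = L.one b :=
  (L.j_top (L.one b) a).symm.trans ((L.j_comm _ _).trans (L.j_top (L.one a) b))

theorem m_eq_left_of_j_eq (x y : α) (h : L.j x y = y) : L.m x y = x := by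
  rw [← h, m_j_self]

theorem m_c_c_eq_of_j_eq (x y : α) (h : L.j x y = y) : L.m (L.c x) (L.c y) = L.c y := by
  rw [m, L.c_invol, L.c_invol, h]

/-- With `L.j x y = y` encoding `x ≤ y`: for comparable elements the quantum equivalence collapses to `x ∪ y'`. -/
theorem equiv_eq_j_c_of_j_eq (x y : α) (h : L.j x y = y) : L.equiv x y = L.j x (L.c y) := by
  rw [equiv, m_eq_left_of_j_eq L x y h, m_c_c_eq_of_j_eq L x y h]

end OrthoLattice

/-- in every ortholattice the mapped orthomodularity identity
(a ∪ (a' ∩ (a∪b))) ≡ (a ∪ b) = 1 holds. -/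
theorem stmt16 {α : Type*} (L : OrthoLattice α) :
    ∀ a b : α,
      L.equiv (L.j a (L.m (L.c a) (L.j a b))) (L.j a b) = L.one a := by
  intro a b
  set y := L.j a b
  set z := L.j a (L.c y)
  have hx : L.j a (L.m (L.c a) y) = L.j a (L.c z) := by rw [OrthoLattice.m, L.c_invol]
  have hcz_le : L.j y (L.c z) = y := by
    simpa only [L.c_invol, L.j_comm (L.c y) a] using L.absorb y (L.c a)
  have hx_le : L.j (L.j a (L.c z)) y = y := by
    rw [L.j_assoc, L.j_comm (L.c z), hcz_le, ← L.j_assoc, L.j_self]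
  rw [hx, L.equiv_eq_j_c_of_j_eq _ _ hx_le, L.j_assoc, L.j_comm (L.c z), ← L.j_assoc]
  exact L.one_eq_one z a
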